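/- arXiv:2604.27816 — 2 statements merged into one kernel-verified Lean document; each statement's English description precedes it below -/
import Mathlib

section
/- Let A be a densely ordered abelian group and G a dense subgroup of A (for all a < b in A there exists g ∈ G with a < g < b). Let x₁ < x₂ < … < x_k be elements of A with 2xᵢ < x_{i+1} and 0 < xᵢ for all i, and suppose xᵢ − xⱼ ∉ G for all i ≠ j. Then for every pair i < j there exists α ∈ A with x_{i-1} < α < xᵢ < 2α < x_{i+1} and xⱼ ∈ α + G. -/
/-!
Density of `G` makes every coset `xⱼ + G` dense as well, so it suffices to find a nonempty open
interval of points `α` satisfying the order conditions. Pick `m` with `m < xᵢ < 2m`; every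
`α ∈ (m, xᵢ)` works: `2α < 2xᵢ < x_{i+1}`, and `2x_{i-1} < xᵢ < 2α` gives `x_{i-1} < α`.
-/

theorem exists_sub_mem_Ioo_of_dense {A : Type*} [AddCommGroup A] [LinearOrder A]
    [IsOrderedAddMonoid A] (G : AddSubgroup A)
    (hdense : ∀ a b : A, a < b → ∃ g ∈ G, a < g ∧ g < b) (c : A) {a b : A} (hab : a < b) :
    ∃ α, a < α ∧ α < b ∧ c - α ∈ G := by
  obtain ⟨g, hg, hbg, hga⟩ := hdense (c - b) (c - a) (sub_lt_sub_left hab c)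
  exact ⟨c - g, lt_sub_comm.mp hga, sub_lt_comm.mp hbg, by simpa using hg⟩

theorem exists_lt_lt_two_nsmul {A : Type*} [AddCommGroup A] [LinearOrder A]
    [IsOrderedAddMonoid A] [DenselyOrdered A] {x : A} (hx : 0 < x) :
    ∃ m, m < x ∧ x < 2 • m := by
  obtain ⟨m₀, hm₀, hm₀x⟩ := exists_between hx
  obtain ⟨m, hm, hmx⟩ := exists_between (max_lt hm₀x (sub_lt_self x hm₀))
  refine ⟨m, hmx, ?_⟩
  calc x = (x - m₀) + m₀ := (sub_add_cancel x m₀).symm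
    _ < m + m := add_lt_add ((le_max_right _ _).trans_lt hm) ((le_max_left _ _).trans_lt hm)
    _ = 2 • m := (two_nsmul m).symm

theorem stmt11_general {A : Type*} [AddCommGroup A] [LinearOrder A] [IsOrderedAddMonoid A] [DenselyOrdered A]
    (G : AddSubgroup A)
    (hdense : ∀ a b : A, a < b → ∃ g ∈ G, a < g ∧ g < b)
    (k : ℕ) (x : ℕ → A) (h0 : x 0 = 0)
    (hpos : ∀ i, 1 ≤ i → i ≤ k → 0 < x i)
    (hstep : ∀ i, 1 ≤ i → i < k → 2 • x i < x (i + 1)) :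
    ∀ i j, 1 ≤ i → i < j → j ≤ k → ∃ α : A,
      x (i - 1) < α ∧ α < x i ∧ x i < 2 • α ∧ 2 • α < x (i + 1) ∧ x j - α ∈ G := by
  intro i j hi hij hjk
  have hik : i < k := hij.trans_le hjk
  obtain ⟨m, hmx, hxm⟩ := exists_lt_lt_two_nsmul (hpos i hi hik.le)
  obtain ⟨α, hmα, hαx, hα⟩ := exists_sub_mem_Ioo_of_dense G hdense (x j) hmx
  have hx2α : x i < 2 • α := hxm.trans (nsmul_lt_nsmul_right two_ne_zero hmα)
  have hprev : 2 • x (i - 1) < x i := by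
    rcases hi.eq_or_lt with rfl | hi
    · simpa [h0] using hpos 1 le_rfl hik.le
    · simpa [Nat.sub_add_cancel hi.le] using hstep (i - 1) (by omega) (by omega)
  exact ⟨α, lt_of_nsmul_lt_nsmul_right 2 (hprev.trans hx2α), hαx, hx2α,
    (nsmul_lt_nsmul_right two_ne_zero hαx).trans (hstep i hi hik), hα⟩

/-- In a densely ordered abelian group `A` with a dense subgroup `G`, given
`0 = x₀`, `x₁ < ⋯ < x_k` positive with `2xᵢ < x_{i+1}` and pairwise in distinct cosets of
`G`, for every pair `i < j` there is `α` with `x_{i-1} < α < xᵢ < 2α < x_{i+1}` and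
`xⱼ ∈ α + G`. -/
theorem stmt11 {A : Type*} [AddCommGroup A] [LinearOrder A] [IsOrderedAddMonoid A] [DenselyOrdered A]
    (G : AddSubgroup A)
    (hdense : ∀ a b : A, a < b → ∃ g ∈ G, a < g ∧ g < b)
    (k : ℕ) (x : ℕ → A) (h0 : x 0 = 0)
    (hpos : ∀ i, 1 ≤ i → i ≤ k → 0 < x i)
    (hmono : ∀ i j, 1 ≤ i → i < j → j ≤ k → x i < x j)
    (hstep : ∀ i, 1 ≤ i → i < k → 2 • x i < x (i + 1))
    (hG : ∀ i j, 1 ≤ i → i ≤ k → 1 ≤ j → j ≤ k → i ≠ j → x i - x j ∉ G) :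
    ∀ i j, 1 ≤ i → i < j → j ≤ k → ∃ α : A,
      x (i - 1) < α ∧ α < x i ∧ x i < 2 • α ∧ 2 • α < x (i + 1) ∧ x j - α ∈ G :=
  stmt11_general G hdense k x h0 hpos hstep
end

section
/- Let A be a densely ordered abelian group with a dense subgroup G such that A/G is infinite. Define F = { {x : a < x < 2a} ∪ (a + G) : a ∈ A, 0 < a }. Then for every k ≥ 2 there exists a subset B ⊆ A with |B| = k such that every subset of B of size at most 2 is of the form S ∩ B for some S ∈ F; consequently the shatter function of F satisfies π(k) ≥ C(k,0)+C(k,1)+C(k,2) for all k ≥ 2. -/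
/-!
Pick scales `lo n < hi n < 2 • lo n` with `2 • hi n ≤ lo (n + 1)`, and points
`b n ∈ (hi n, 2 • lo n)` lying in pairwise distinct cosets of `G`. For `a ∈ (lo j, hi j)` the
interval `(a, 2a)` contains `b j` and no other `b n`, while the coset `a + G` contains exactly
the `b n` in the coset of `a`. By density of `G`, `a` can be chosen in `(lo j, hi j)` and in any
prescribed coset, so a pair `{b i, b j}` is cut out by `a ∈ (lo j, hi j) ∩ (b i + G)`; taking
`j` outside the index range yields the singletons and, with an unused coset, the empty set.
-/

open Finset

theorem Finset.exists_mem_iff_eq_or_eq_of_card_le_two {α : Type*} [DecidableEq α] {D : Finset α}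
    {d : α} (hd : d ∉ D) (hD : #D ≤ 2) : ∃ j m : α, ∀ n ≠ d, n ∈ D ↔ n = j ∨ n = m := by
  rcases (by omega : #D = 0 ∨ #D = 1 ∨ #D = 2) with h | h | h
  · exact ⟨d, d, fun n hn => by simp [card_eq_zero.mp h, hn]⟩
  · obtain ⟨x, rfl⟩ := card_eq_one.mp h
    exact ⟨x, x, fun n _ => by simp⟩
  · obtain ⟨x, y, -, rfl⟩ := card_eq_two.mp h
    exact ⟨x, y, fun n _ => by simp⟩

theorem Finset.sum_choose_le_ncard {α : Type*} {B : Finset α} {𝒯 : Set (Set α)} (d : ℕ)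
    (h𝒯 : ∀ T ∈ 𝒯, T ⊆ B) (hB : ∀ C ⊆ B, #C ≤ d → (C : Set α) ∈ 𝒯) :
    ∑ i ∈ range (d + 1), (#B).choose i ≤ 𝒯.ncard := by
  classical
  set P := (range (d + 1)).biUnion (powersetCard · B)
  have hP : #P = ∑ i ∈ range (d + 1), (#B).choose i := by
    rw [card_biUnion (B.pairwise_disjoint_powersetCard.set_pairwise _)]
    simp only [card_powersetCard]
  have hfin : 𝒯.Finite := (B.finite_toSet.finite_subsets).subset h𝒯
  have hsub : ((↑) : Finset α → Set α) '' P ⊆ 𝒯 := by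
    rintro _ ⟨C, hC, rfl⟩
    obtain ⟨i, hi, hCi⟩ := mem_biUnion.mp hC
    rw [mem_powersetCard] at hCi
    exact hB C hCi.1 (by rw [hCi.2]; exact Nat.lt_succ_iff.mp (mem_range.mp hi))
  calc ∑ i ∈ range (d + 1), (#B).choose i = #P := hP.symm
    _ = (((↑) : Finset α → Set α) '' P).ncard := by
      rw [Set.ncard_image_of_injective _ coe_injective, Set.ncard_coe_finset]
    _ ≤ 𝒯.ncard := Set.ncard_le_ncard hsub hfin

section AddGroup

variable {A : Type*} [AddGroup A] {G : AddSubgroup A}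

theorem mem_add_image_addSubgroup_iff {a x : A} :
    x ∈ (a + ·) '' (G : Set A) ↔ (x : A ⧸ G) = a := by
  rw [eq_comm, QuotientAddGroup.eq]
  refine ⟨?_, fun h => ⟨-a + x, h, by simp⟩⟩
  rintro ⟨g, hg, rfl⟩
  simpa using hg

theorem injective_of_mk_eq {ι : Type*} {e : ι → A ⧸ G} (he : Function.Injective e) {b : ι → A}
    (hbe : ∀ n, (b n : A ⧸ G) = e n) : Function.Injective b :=
  fun n m h => he (by rw [← hbe, ← hbe, h])

def intervalCosetUnion [Preorder A] (G : AddSubgroup A) (a : A) : Set A :=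
  {x : A | a < x ∧ x < 2 • a} ∪ (a + ·) '' (G : Set A)

theorem mem_intervalCosetUnion [Preorder A] {a x : A} :
    x ∈ intervalCosetUnion G a ↔ x ∈ Set.Ioo a (2 • a) ∨ (x : A ⧸ G) = a :=
  or_congr Iff.rfl mem_add_image_addSubgroup_iff

end AddGroup

structure DoublingScale (A : Type*) [AddCommGroup A] [LinearOrder A] where
  lo : ℕ → A
  hi : ℕ → A
  lo_lt_hi : ∀ n, lo n < hi n
  hi_lt_two_nsmul_lo : ∀ n, hi n < 2 • lo n
  two_nsmul_hi_le_lo_succ : ∀ n, 2 • hi n ≤ lo (n + 1)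

section Ordered

variable {A : Type*} [AddCommGroup A] [LinearOrder A] [IsOrderedAddMonoid A]

theorem exists_mk_eq_mem_Ioo {G : AddSubgroup A}
    (hdense : ∀ a b : A, a < b → ∃ g ∈ G, a < g ∧ g < b) (c : A ⧸ G) {x y : A} (hxy : x < y) :
    ∃ a : A, (a : A ⧸ G) = c ∧ x < a ∧ a < y := by
  obtain ⟨t, rfl⟩ := QuotientAddGroup.mk_surjective c
  obtain ⟨g, hg, hxg, hgy⟩ := hdense (x - t) (y - t) (sub_lt_sub_right hxy t)
  exact ⟨t + g, QuotientAddGroup.mk_add_of_mem t hg, sub_lt_iff_lt_add'.mp hxg,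
    lt_sub_iff_add_lt'.mp hgy⟩

theorem DoublingScale.nonempty [Nontrivial A] [DenselyOrdered A] :
    Nonempty (DoublingScale A) := by
  obtain ⟨p, hp⟩ := exists_zero_lt (α := A)
  obtain ⟨q, hpq, hq⟩ : ∃ q, p < q ∧ q < 2 • p :=
    exists_between (by rw [two_nsmul]; exact lt_add_of_pos_left _ hp)
  have hpow (n : ℕ) : 4 ^ n ≠ 0 := pow_ne_zero n four_ne_zero
  refine ⟨⟨fun n => 4 ^ n • p, fun n => 4 ^ n • q, fun n => nsmul_lt_nsmul_right (hpow n) hpq,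
    fun n => ?_, fun n => ?_⟩⟩
  · rw [smul_comm]
    exact nsmul_lt_nsmul_right (hpow n) hq
  · have h2q : 2 • q ≤ 4 • p := by
      have := nsmul_lt_nsmul_right two_ne_zero hq
      rw [← mul_nsmul'] at this
      exact this.le
    rw [smul_comm, pow_succ, mul_nsmul, smul_comm 4]
    exact nsmul_le_nsmul_right h2q _

namespace DoublingScale

variable (s : DoublingScale A)

theorem lo_pos (n : ℕ) : 0 < s.lo n := by
  have h := (s.lo_lt_hi n).trans (s.hi_lt_two_nsmul_lo n)
  rw [two_nsmul] at h
  simpa using h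

theorem lo_strictMono : StrictMono s.lo := by
  refine strictMono_nat_of_lt_succ fun n => ?_
  have hhi : 0 < s.hi n := (s.lo_pos n).trans (s.lo_lt_hi n)
  calc s.lo n < s.hi n := s.lo_lt_hi n
    _ < 2 • s.hi n := by rw [two_nsmul]; exact lt_add_of_pos_left _ hhi
    _ ≤ s.lo (n + 1) := s.two_nsmul_hi_le_lo_succ n

variable {b : ℕ → A}

theorem mem_Ioo_two_nsmul_iff (hb : ∀ n, s.hi n < b n ∧ b n < 2 • s.lo n) {a : A} {j : ℕ}
    (ha : s.lo j < a ∧ a < s.hi j) (n : ℕ) :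
    b n ∈ Set.Ioo a (2 • a) ↔ n = j := by
  have two_nsmul_lt {x y : A} (h : x < y) : 2 • x < 2 • y := nsmul_lt_nsmul_right two_ne_zero h
  refine ⟨fun ⟨hab, hba⟩ => ?_, ?_⟩
  · by_contra hne
    rcases Nat.lt_or_gt_of_ne hne with hlt | hgt
    · have : b n < a := calc
        b n < 2 • s.lo n := (hb n).2
        _ < 2 • s.hi n := two_nsmul_lt (s.lo_lt_hi n)
        _ ≤ s.lo (n + 1) := s.two_nsmul_hi_le_lo_succ n
        _ ≤ s.lo j := s.lo_strictMono.monotone hlt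
        _ < a := ha.1
      exact lt_asymm hab this
    · have : 2 • a < b n := calc
        2 • a < 2 • s.hi j := two_nsmul_lt ha.2
        _ ≤ s.lo (j + 1) := s.two_nsmul_hi_le_lo_succ j
        _ ≤ s.lo n := s.lo_strictMono.monotone hgt
        _ < s.hi n := s.lo_lt_hi n
        _ < b n := (hb n).1
      exact lt_asymm hba this
  · rintro rfl
    exact ⟨ha.2.trans (hb n).1, (hb n).2.trans (two_nsmul_lt ha.1)⟩

variable {G : AddSubgroup A} {e : ℕ → A ⧸ G}

theorem mem_intervalCosetUnion_iff (he : Function.Injective e)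
    (hb : ∀ n, s.hi n < b n ∧ b n < 2 • s.lo n) (hbe : ∀ n, (b n : A ⧸ G) = e n)
    {a : A} {j m : ℕ} (ha : s.lo j < a ∧ a < s.hi j) (ham : (a : A ⧸ G) = e m) (n : ℕ) :
    b n ∈ intervalCosetUnion G a ↔ n = j ∨ n = m := by
  rw [mem_intervalCosetUnion, s.mem_Ioo_two_nsmul_iff hb ha, hbe, ham, he.eq_iff]

theorem exists_intervalCosetUnion_inter_eq
    (hdense : ∀ a b : A, a < b → ∃ g ∈ G, a < g ∧ g < b) (he : Function.Injective e)
    (hb : ∀ n, s.hi n < b n ∧ b n < 2 • s.lo n) (hbe : ∀ n, (b n : A ⧸ G) = e n)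
    {k : ℕ} {C : Finset A} (hC : C ⊆ (range k).image b) (hC2 : #C ≤ 2) :
    ∃ a : A, 0 < a ∧ intervalCosetUnion G a ∩ ↑((range k).image b) = (↑C : Set A) := by
  classical
  obtain ⟨D, hDk, rfl⟩ := subset_image_iff.mp hC
  rw [card_image_of_injective _ (injective_of_mk_eq he hbe)] at hC2
  obtain ⟨j, m, hD⟩ :=
    exists_mem_iff_eq_or_eq_of_card_le_two (d := k) (fun h => by simpa using hDk h) hC2
  obtain ⟨a, ham, ha⟩ := exists_mk_eq_mem_Ioo hdense (e m) (s.lo_lt_hi j)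
  have hmem := s.mem_intervalCosetUnion_iff he hb hbe ha ham
  refine ⟨a, (s.lo_pos j).trans ha.1, Set.ext fun x => ?_⟩
  simp only [Set.mem_inter_iff, coe_image, coe_range, Set.mem_image, Set.mem_Iio]
  constructor
  · rintro ⟨hx, n, hn, rfl⟩
    exact ⟨n, (hD n hn.ne).mpr ((hmem n).mp hx), rfl⟩
  · rintro ⟨n, hn, rfl⟩
    have hnk : n < k := mem_range.mp (hDk hn)
    exact ⟨(hmem n).mpr ((hD n hnk.ne).mp hn), n, hnk, rfl⟩

end DoublingScale

end Ordered

theorem stmt17_general {A : Type*} [AddCommGroup A] [LinearOrder A] [IsOrderedAddMonoid A] [DenselyOrdered A]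
    (G : AddSubgroup A)
    (hdense : ∀ a b : A, a < b → ∃ g ∈ G, a < g ∧ g < b)
    (hinf : Infinite (A ⧸ G)) (k : ℕ) :
    ∃ B : Finset A, B.card = k ∧
      (∀ C : Finset A, C ⊆ B → C.card ≤ 2 → ∃ a : A, 0 < a ∧
        ({x : A | a < x ∧ x < 2 • a} ∪ (a + ·) '' (G : Set A)) ∩ ↑B = (↑C : Set A)) ∧
      k.choose 0 + k.choose 1 + k.choose 2 ≤
        Set.ncard {T : Set A | ∃ a : A, 0 < a ∧
          T = ({x : A | a < x ∧ x < 2 • a} ∪ (a + ·) '' (G : Set A)) ∩ ↑B} := by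
  classical
  have : Nontrivial A := QuotientAddGroup.mk_surjective.nontrivial (β := A ⧸ G)
  obtain ⟨s⟩ := DoublingScale.nonempty (A := A)
  set e := Infinite.natEmbedding (A ⧸ G)
  choose b hbe hb using fun n => exists_mk_eq_mem_Ioo hdense (e n) (s.hi_lt_two_nsmul_lo n)
  set B := (range k).image b
  have hBcard : #B = k := by
    rw [card_image_of_injective _ (injective_of_mk_eq e.injective hbe), card_range]
  have hshatter : ∀ C ⊆ B, #C ≤ 2 → ∃ a, 0 < a ∧ intervalCosetUnion G a ∩ ↑B = ↑C :=
    fun _ => s.exists_intervalCosetUnion_inter_eq hdense e.injective hb hbe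
  refine ⟨B, hBcard, hshatter, ?_⟩
  calc k.choose 0 + k.choose 1 + k.choose 2 = ∑ i ∈ range (2 + 1), (#B).choose i := by
        simp [sum_range_succ, hBcard]
    _ ≤ _ := sum_choose_le_ncard (𝒯 := {T | ∃ a, 0 < a ∧ T = intervalCosetUnion G a ∩ ↑B}) 2
        (by rintro _ ⟨a, -, rfl⟩; exact Set.inter_subset_right)
        fun C hC hC2 => (hshatter C hC hC2).imp fun _ ⟨ha, hC⟩ => ⟨ha, hC.symm⟩

/-- In a densely ordered abelian group `A` with a dense subgroup `G` such that `A/G` is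
infinite, the family `F = { (a, 2a) ∪ (a + G) : 0 < a }` shatters, on some `k`-element set
`B`, all subsets of size at most `2`; consequently its shatter function satisfies
`π(k) ≥ C(k,0)+C(k,1)+C(k,2)` for all `k ≥ 2`. -/
theorem stmt17 {A : Type*} [AddCommGroup A] [LinearOrder A] [IsOrderedAddMonoid A] [DenselyOrdered A]
    (G : AddSubgroup A)
    (hdense : ∀ a b : A, a < b → ∃ g ∈ G, a < g ∧ g < b)
    (hinf : Infinite (A ⧸ G)) (k : ℕ) (hk : 2 ≤ k) :
    ∃ B : Finset A, B.card = k ∧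
      (∀ C : Finset A, C ⊆ B → C.card ≤ 2 → ∃ a : A, 0 < a ∧
        ({x : A | a < x ∧ x < 2 • a} ∪ (a + ·) '' (G : Set A)) ∩ ↑B = (↑C : Set A)) ∧
      k.choose 0 + k.choose 1 + k.choose 2 ≤
        Set.ncard {T : Set A | ∃ a : A, 0 < a ∧
          T = ({x : A | a < x ∧ x < 2 • a} ∪ (a + ·) '' (G : Set A)) ∩ ↑B} :=
  stmt17_general G hdense hinf k
end
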